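/- For the embedding X_I = α_I + α̃_I η₁η₂, Θᵢ = σ_{ij}ηⱼ of ℂ^{0|2} into ℙ^{1|2}, the Berezin integral M(P)_{kl} = ∫∏dηᵢdη̄ᵢ [iΘ_kΘ̄_l / (|X₀|²+|X₁|²+iΣⱼΘⱼΘ̄ⱼ)] equals λδ_{kl} with λ = |det σ|²/(Σᵢ|αᵢ|²)², i.e., the su(N)-block of the moment map is automatically proportional to the identity. -/

import Mathlib

noncomputable section

/-- The Grassmann algebra over `ℂ` on the four odd generators `η₁, η₂, η̄₁, η̄₂`. -/
abbrev G4 := ExteriorAlgebra ℂ (Fin 4 → ℂ)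

/-- The `i`-th odd generator. -/
def gen (i : Fin 4) : G4 := ExteriorAlgebra.ι ℂ (Pi.single i 1)

/-- The odd generators `η₁, η₂`. -/
def η (i : Fin 2) : G4 := gen ⟨i.val, by omega⟩

/-- The conjugate odd generators `η̄₁, η̄₂`. -/
def ηb (i : Fin 2) : G4 := gen ⟨i.val + 2, by omega⟩

/-- The `k`-th graded piece (span of `k`-fold products of generators) of `G4`. -/
def gradedPiece (k : ℕ) : Submodule ℂ G4 :=
  LinearMap.range (ExteriorAlgebra.ι ℂ : (Fin 4 → ℂ) →ₗ[ℂ] G4) ^ k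

/-!
The denominator is `D = a + N` with body `a = |α₀|² + |α₁|² ≠ 0` and an even nilpotent soul `N`,
so `N³ = 0` and the geometric series gives `D⁻¹ = a⁻¹ - a⁻² N + a⁻³ N²`. Against the quadratic
`Θ_k Θ̄_l` only `-a⁻² N` reaches the top degree, and only through the `η η̄`-part `i G` of `N`,
`G = σᵀ σ̄`: there `N Θ_k Θ̄_l = -(σ̄_l ⬝ adj (i G) σ_k) ω` with `ω = η₁η₂η̄₁η̄₂`. Since
`adj (σᵀ σ̄) = adj σ̄ · adj σᵀ` and `adj σᵀ · σᵀ = det σ`, one has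
`σ̄_l ⬝ adj G σ_k = δ_kl det σ · det σ̄`, and with `∫ ω = -1` the factors `i` combine to `λ δ_kl`.
-/

open ComplexConjugate Finset Matrix

theorem Ring.inverse_algebraMap_add_of_pow_eq_zero {K R : Type*} [Field K] [Ring R]
    [Algebra K R] {a : K} (ha : a ≠ 0) {N : R} {n : ℕ} (hN : N ^ n = 0) :
    Ring.inverse (algebraMap K R a + N) = a⁻¹ • ∑ i ∈ range n, (-a⁻¹ • N) ^ i := by
  have hx : (-a⁻¹ • N) ^ n = 0 := by rw [smul_pow, hN, smul_zero]
  have hsplit : algebraMap K R a + N = a • (1 - -a⁻¹ • N) := by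
    rw [smul_sub, smul_smul, mul_neg, mul_inv_cancel₀ ha, neg_smul, one_smul, sub_neg_eq_add,
      Algebra.algebraMap_eq_smul_one]
  have hright : (algebraMap K R a + N) * (a⁻¹ • ∑ i ∈ range n, (-a⁻¹ • N) ^ i) = 1 := by
    rw [hsplit, smul_mul_smul_comm, mul_inv_cancel₀ ha, one_smul, mul_neg_geom_sum, hx, sub_zero]
  have hleft : (a⁻¹ • ∑ i ∈ range n, (-a⁻¹ • N) ^ i) * (algebraMap K R a + N) = 1 := by
    rw [hsplit, smul_mul_smul_comm, inv_mul_cancel₀ ha, one_smul, geom_sum_mul_neg, hx, sub_zero]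
  exact Ring.inverse_unit ⟨_, _, hright, hleft⟩

theorem Matrix.dotProduct_adjugate_transpose_mul_mulVec {n R : Type*} [Fintype n]
    [DecidableEq n] [CommRing R] (σ τ : Matrix n n R) (k l : n) :
    τ l ⬝ᵥ (adjugate (σᵀ * τ) *ᵥ σ k) = if k = l then σ.det * τ.det else 0 := by
  have hσ : adjugate σᵀ *ᵥ σ k = σ.det • Pi.single k 1 := by
    have : σ k = σᵀ *ᵥ Pi.single k 1 := by
      ext m; simp
    rw [this, mulVec_mulVec, adjugate_mul, det_transpose, smul_mulVec, one_mulVec]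
  have hτ (x : n → R) : τ l ⬝ᵥ (adjugate τ *ᵥ x) = τ.det * x l := by
    change (τ *ᵥ (adjugate τ *ᵥ x)) l = _
    rw [mulVec_mulVec, mul_adjugate, smul_mulVec, one_mulVec, Pi.smul_apply, smul_eq_mul]
  rw [adjugate_mul_distrib, ← mulVec_mulVec, hσ, hτ]
  simp [Pi.single_apply, eq_comm, mul_comm]

theorem gen_mul_self (i : Fin 4) : gen i * gen i = 0 := ExteriorAlgebra.ι_sq_zero _

theorem gen_mul_gen_swap (i j : Fin 4) : gen i * gen j = -(gen j * gen i) :=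
  eq_neg_of_add_eq_zero_left (ExteriorAlgebra.ι_add_mul_swap _ _)

theorem η_mul_self (i : Fin 2) : η i * η i = 0 := gen_mul_self _

theorem ηb_mul_self (i : Fin 2) : ηb i * ηb i = 0 := gen_mul_self _

theorem ηb_mul_η (j i : Fin 2) : ηb j * η i = -(η i * ηb j) := gen_mul_gen_swap _ _

theorem η_one_mul_η_zero : η 1 * η 0 = -(η 0 * η 1) := gen_mul_gen_swap _ _

theorem ηb_one_mul_ηb_zero : ηb 1 * ηb 0 = -(ηb 0 * ηb 1) := gen_mul_gen_swap _ _

theorem η_mul_η_mul_self (i : Fin 2) (x : G4) : η i * (η i * x) = 0 := by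
  rw [← mul_assoc, η_mul_self, zero_mul]

theorem ηb_mul_ηb_mul_self (i : Fin 2) (x : G4) : ηb i * (ηb i * x) = 0 := by
  rw [← mul_assoc, ηb_mul_self, zero_mul]

theorem ηb_mul_η_mul (j i : Fin 2) (x : G4) : ηb j * (η i * x) = -(η i * (ηb j * x)) := by
  rw [← mul_assoc, ηb_mul_η, neg_mul, mul_assoc]

theorem η_one_mul_η_zero_mul (x : G4) : η 1 * (η 0 * x) = -(η 0 * (η 1 * x)) := by
  rw [← mul_assoc, η_one_mul_η_zero, neg_mul, mul_assoc]

theorem ηb_one_mul_ηb_zero_mul (x : G4) : ηb 1 * (ηb 0 * x) = -(ηb 0 * (ηb 1 * x)) := by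
  rw [← mul_assoc, ηb_one_mul_ηb_zero, neg_mul, mul_assoc]

def ω : G4 := η 0 * η 1 * ηb 0 * ηb 1

theorem ω_mul_η (i : Fin 2) : ω * η i = 0 := by
  fin_cases i <;>
    simp only [ω, mul_assoc, ηb_mul_η, ηb_mul_η_mul, η_one_mul_η_zero_mul, η_mul_η_mul_self,
      mul_neg, neg_neg, mul_zero, neg_zero, Fin.zero_eta, Fin.mk_one]

theorem ω_mul_ηb (i : Fin 2) : ω * ηb i = 0 := by
  fin_cases i <;>
    simp only [ω, mul_assoc, ηb_one_mul_ηb_zero, ηb_mul_self, ηb_mul_ηb_mul_self, mul_neg,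
      neg_zero, mul_zero, Fin.zero_eta, Fin.mk_one]

theorem ω_mul_self : ω * ω = 0 := by
  nth_rw 2 [ω]
  simp only [← mul_assoc, ω_mul_η, zero_mul]

theorem ω_mul_sum_smul_η (s : Fin 2 → ℂ) : ω * ∑ m, s m • η m = 0 := by
  simp only [Finset.mul_sum, mul_smul_comm, ω_mul_η, smul_zero, Finset.sum_const_zero]

def evenSoul (B A C : ℂ) (H : Matrix (Fin 2) (Fin 2) ℂ) : G4 :=
  B • (η 0 * η 1) + A • (ηb 0 * ηb 1) + ∑ m, ∑ n, H m n • (η m * ηb n) + C • ω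

section evenSoul

variable (B A C : ℂ) (H : Matrix (Fin 2) (Fin 2) ℂ)

theorem ω_mul_evenSoul : ω * evenSoul B A C H = 0 := by
  simp only [evenSoul, mul_add, mul_smul_comm, Finset.mul_sum, ← mul_assoc, ω_mul_η, ω_mul_ηb,
    ω_mul_self, zero_mul, smul_zero, Finset.sum_const_zero, add_zero]

theorem evenSoul_mul_self :
    evenSoul B A C H * evenSoul B A C H = (2 * B * A - 2 * H.det) • ω := by
  simp only [evenSoul, ω, det_fin_two, Fin.sum_univ_two, smul_add, mul_add, add_mul,
    smul_mul_assoc, mul_smul_comm, smul_smul, mul_assoc, mul_neg, smul_neg, neg_neg, mul_zero,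
    smul_zero, η_mul_self, η_mul_η_mul_self, ηb_mul_self, ηb_mul_ηb_mul_self, ηb_mul_η,
    ηb_mul_η_mul, η_one_mul_η_zero_mul, ηb_one_mul_ηb_zero, ηb_one_mul_ηb_zero_mul]
  match_scalars
  ring

theorem evenSoul_pow_three : evenSoul B A C H ^ 3 = 0 := by
  rw [pow_succ, pow_two, evenSoul_mul_self, smul_mul_assoc, ω_mul_evenSoul, smul_zero]

theorem evenSoul_mul_sum_η_mul_sum_ηb (s t : Fin 2 → ℂ) :
    evenSoul B A C H * ((∑ m, s m • η m) * ∑ n, t n • ηb n)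
      = -(t ⬝ᵥ (H.adjugate *ᵥ s)) • ω := by
  simp only [evenSoul, ω, adjugate_fin_two, dotProduct, mulVec, of_apply, cons_val',
    cons_val_zero, cons_val_one, empty_val', cons_val_fin_one, Fin.sum_univ_two, smul_add, mul_add,
    add_mul, smul_mul_assoc, mul_smul_comm, smul_smul, mul_assoc, neg_mul, mul_neg, smul_neg,
    neg_neg, mul_zero, smul_zero, η_mul_η_mul_self, ηb_mul_self, ηb_mul_ηb_mul_self, ηb_mul_η_mul,
    η_one_mul_η_zero_mul, ηb_one_mul_ηb_zero]
  match_scalars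
  ring

end evenSoul

theorem inverse_algebraMap_add_evenSoul_mul {a : ℂ} (ha : a ≠ 0) (B A C : ℂ)
    (H : Matrix (Fin 2) (Fin 2) ℂ) (s t : Fin 2 → ℂ) :
    Ring.inverse (algebraMap ℂ G4 a + evenSoul B A C H) * ((∑ m, s m • η m) * ∑ n, t n • ηb n)
      = a⁻¹ • ((∑ m, s m • η m) * ∑ n, t n • ηb n)
        + (a⁻¹ ^ 2 * (t ⬝ᵥ (H.adjugate *ᵥ s))) • ω := by
  have hω : ω * ((∑ m, s m • η m) * ∑ n, t n • ηb n) = 0 := by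
    rw [← mul_assoc, ω_mul_sum_smul_η, zero_mul]
  rw [Ring.inverse_algebraMap_add_of_pow_eq_zero ha (evenSoul_pow_three B A C H)]
  simp only [sum_range_succ, range_zero, sum_empty, pow_zero, pow_one, zero_add, sq,
    add_mul, one_mul, smul_mul_assoc, mul_smul_comm, evenSoul_mul_sum_η_mul_sum_ηb,
    evenSoul_mul_self, hω, smul_zero, add_zero]
  module

theorem sum_smul_η_mem_range (s : Fin 2 → ℂ) :
    ∑ m, s m • η m ∈ LinearMap.range (ExteriorAlgebra.ι ℂ : (Fin 4 → ℂ) →ₗ[ℂ] G4) :=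
  Submodule.sum_mem _ fun _ _ => Submodule.smul_mem _ _ (LinearMap.mem_range_self _ _)

theorem sum_smul_ηb_mem_range (t : Fin 2 → ℂ) :
    ∑ n, t n • ηb n ∈ LinearMap.range (ExteriorAlgebra.ι ℂ : (Fin 4 → ℂ) →ₗ[ℂ] G4) :=
  Submodule.sum_mem _ fun _ _ => Submodule.smul_mem _ _ (LinearMap.mem_range_self _ _)

theorem mul_mem_gradedPiece_two {x y : G4}
    (hx : x ∈ LinearMap.range (ExteriorAlgebra.ι ℂ : (Fin 4 → ℂ) →ₗ[ℂ] G4))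
    (hy : y ∈ LinearMap.range (ExteriorAlgebra.ι ℂ : (Fin 4 → ℂ) →ₗ[ℂ] G4)) :
    x * y ∈ gradedPiece 2 := by
  rw [gradedPiece, pow_two]
  exact Submodule.mul_mem_mul hx hy

theorem η_mul_ηb_mul_η_mul_ηb : η 0 * ηb 0 * η 1 * ηb 1 = -ω := by
  simp only [ω, mul_assoc, ηb_mul_η_mul, mul_neg]

theorem normSq_add_normSq_ne_zero {v : Fin 2 → ℂ} (hv : v ≠ 0) :
    (Complex.normSq (v 0) + Complex.normSq (v 1) : ℂ) ≠ 0 := by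
  obtain ⟨i, hi⟩ := Function.ne_iff.mp hv
  have hpos := Complex.normSq_pos.mpr hi
  have h0 := Complex.normSq_nonneg (v 0)
  have h1 := Complex.normSq_nonneg (v 1)
  rw [← Complex.ofReal_add, Complex.ofReal_ne_zero]
  fin_cases i <;> simp only [Fin.zero_eta, Fin.mk_one] at hpos <;> linarith

theorem map_smul_eq_conj_smul (c : G4 →+ G4) (hc_mul : ∀ x y : G4, c (x * y) = c x * c y)
    (hc_alg : ∀ z : ℂ, c (algebraMap ℂ G4 z) = algebraMap ℂ G4 (conj z)) (z : ℂ) (x : G4) :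
    c (z • x) = conj z • c x := by
  rw [Algebra.smul_def, hc_mul, hc_alg, ← Algebra.smul_def]

theorem map_sum_smul_η (c : G4 →+ G4) (hc_mul : ∀ x y : G4, c (x * y) = c x * c y)
    (hc_alg : ∀ z : ℂ, c (algebraMap ℂ G4 z) = algebraMap ℂ G4 (conj z))
    (hc_η : ∀ i : Fin 2, c (η i) = ηb i) (s : Fin 2 → ℂ) :
    c (∑ m, s m • η m) = ∑ m, conj (s m) • ηb m := by
  simp only [map_sum, map_smul_eq_conj_smul c hc_mul hc_alg, hc_η]

theorem denominator_eq_algebraMap_add_evenSoul (c : G4 →+ G4)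
    (hc_mul : ∀ x y : G4, c (x * y) = c x * c y)
    (hc_alg : ∀ z : ℂ, c (algebraMap ℂ G4 z) = algebraMap ℂ G4 (conj z))
    (hc_η : ∀ i : Fin 2, c (η i) = ηb i) (α at' : Fin 2 → ℂ) (σ : Matrix (Fin 2) (Fin 2) ℂ) :
    let X : Fin 2 → G4 := fun I => algebraMap ℂ G4 (α I) + at' I • (η 0 * η 1)
    let Θ : Fin 2 → G4 := fun i => ∑ j, σ i j • η j
    X 0 * c (X 0) + X 1 * c (X 1) + Complex.I • (Θ 0 * c (Θ 0) + Θ 1 * c (Θ 1))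
      = algebraMap ℂ G4 (Complex.normSq (α 0) + Complex.normSq (α 1) : ℂ)
        + evenSoul (∑ I, at' I * conj (α I)) (∑ I, α I * conj (at' I))
            (∑ I, at' I * conj (at' I)) (Complex.I • (σᵀ * σ.map conj)) := by
  intro X Θ
  simp only [X, Θ, map_sum_smul_η c hc_mul hc_alg hc_η, map_add, hc_alg, hc_mul, hc_η,
    map_smul_eq_conj_smul c hc_mul hc_alg, Complex.normSq_eq_conj_mul_self]
  simp only [evenSoul, ω, Algebra.algebraMap_eq_smul_one, Fin.sum_univ_two, Matrix.smul_apply,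
    Matrix.mul_apply, transpose_apply, map_apply, smul_add, mul_add, add_mul, smul_mul_assoc,
    mul_smul_comm, smul_smul, mul_one, one_mul, mul_assoc]
  match_scalars <;> ring

theorem su_block_automatically_balanced_general (BerInt : G4 →ₗ[ℂ] ℂ)
    (hBer_low : ∀ k : ℕ, k < 4 → ∀ x ∈ gradedPiece k, BerInt x = 0)
    (hBer_top : BerInt (η 0 * ηb 0 * η 1 * ηb 1) = 1)
    (c : G4 →+ G4)
    (hc_mul : ∀ x y : G4, c (x * y) = c x * c y)
    (hc_alg : ∀ z : ℂ, c (algebraMap ℂ G4 z) = algebraMap ℂ G4 (starRingEnd ℂ z))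
    (hc_η : ∀ i : Fin 2, c (η i) = ηb i)
    (α at' : Fin 2 → ℂ) (hα : α ≠ 0) (σ : Matrix (Fin 2) (Fin 2) ℂ) :
    let X : Fin 2 → G4 := fun I => algebraMap ℂ G4 (α I) + at' I • (η 0 * η 1)
    let Θ : Fin 2 → G4 := fun i => ∑ j, σ i j • η j
    let D : G4 := X 0 * c (X 0) + X 1 * c (X 1)
      + Complex.I • (Θ 0 * c (Θ 0) + Θ 1 * c (Θ 1))
    ∀ k l : Fin 2,
      BerInt (Ring.inverse D * (Complex.I • (Θ k * c (Θ l))))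
        = if k = l then
            ((Complex.normSq σ.det : ℂ)
              / ((Complex.normSq (α 0) + Complex.normSq (α 1) : ℂ)) ^ 2)
          else 0 := by
  intro X Θ D k l
  have hBer_ω : BerInt ω = -1 := by
    rw [← neg_neg ω, ← η_mul_ηb_mul_η_mul_ηb, map_neg, hBer_top]
  have hBer_quadratic (s t : Fin 2 → ℂ) : BerInt ((∑ m, s m • η m) * ∑ n, t n • ηb n) = 0 :=
    hBer_low 2 (by norm_num) _
      (mul_mem_gradedPiece_two (sum_smul_η_mem_range s) (sum_smul_ηb_mem_range t))
  have hminors : (fun m => conj (σ l m)) ⬝ᵥ (adjugate (σᵀ * σ.map conj) *ᵥ σ k)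
      = if k = l then σ.det * conj σ.det else 0 := by
    rw [(starRingEnd ℂ).map_det σ]
    exact dotProduct_adjugate_transpose_mul_mulVec σ (σ.map conj) k l
  have hD : D = _ := denominator_eq_algebraMap_add_evenSoul c hc_mul hc_alg hc_η α at' σ
  simp only [hD, Θ, map_sum_smul_η c hc_mul hc_alg hc_η]
  rw [mul_smul_comm, map_smul,
    inverse_algebraMap_add_evenSoul_mul (normSq_add_normSq_ne_zero hα), map_add, map_smul,
    map_smul, hBer_quadratic, hBer_ω, adjugate_smul, Fintype.card_fin, smul_mulVec,
    dotProduct_smul, hminors]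
  set a : ℂ := Complex.normSq (α 0) + Complex.normSq (α 1)
  split_ifs
  · rw [Complex.normSq_eq_conj_mul_self (z := σ.det), div_eq_mul_inv, ← inv_pow]
    simp only [smul_eq_mul]
    linear_combination (-(a⁻¹ ^ 2) * (σ.det * conj σ.det)) * Complex.I_sq
  · simp

/-- For the embedding `X_I = α_I + α̃_I η₁η₂`, `Θᵢ = σ_{ij} ηⱼ` of `ℂ^{0|2}` into `ℙ^{1|2}`
(with bodies `(α₀, α₁) ≠ 0`), the Berezin integral
`M(P)_{kl} = ∫∏dηᵢdη̄ᵢ [iΘ_kΘ̄_l / (|X₀|²+|X₁|²+iΣⱼΘⱼΘ̄ⱼ)]` equals `λ δ_{kl}` with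
`λ = |det σ|²/(Σᵢ|αᵢ|²)²`: the `su(N)`-block of the moment map is automatically
proportional to the identity.  `BerInt` is the Berezin integral (linear, vanishing in
degree `< 4`, normalized on the top monomial), `c` the Grassmann conjugation. -/
theorem su_block_automatically_balanced (BerInt : G4 →ₗ[ℂ] ℂ)
    (hBer_low : ∀ k : ℕ, k < 4 → ∀ x ∈ gradedPiece k, BerInt x = 0)
    (hBer_top : BerInt (η 0 * ηb 0 * η 1 * ηb 1) = 1)
    (c : G4 →+ G4)
    (hc_mul : ∀ x y : G4, c (x * y) = c x * c y)
    (hc_alg : ∀ z : ℂ, c (algebraMap ℂ G4 z) = algebraMap ℂ G4 (starRingEnd ℂ z))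
    (hc_η : ∀ i : Fin 2, c (η i) = ηb i) (hc_ηb : ∀ i : Fin 2, c (ηb i) = η i)
    (α at' : Fin 2 → ℂ) (hα : α ≠ 0) (σ : Matrix (Fin 2) (Fin 2) ℂ) :
    let X : Fin 2 → G4 := fun I => algebraMap ℂ G4 (α I) + at' I • (η 0 * η 1)
    let Θ : Fin 2 → G4 := fun i => ∑ j, σ i j • η j
    let D : G4 := X 0 * c (X 0) + X 1 * c (X 1)
      + Complex.I • (Θ 0 * c (Θ 0) + Θ 1 * c (Θ 1))
    ∀ k l : Fin 2,
      BerInt (Ring.inverse D * (Complex.I • (Θ k * c (Θ l))))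
        = if k = l then
            ((Complex.normSq σ.det : ℂ)
              / ((Complex.normSq (α 0) + Complex.normSq (α 1) : ℂ)) ^ 2)
          else 0 :=
  su_block_automatically_balanced_general BerInt hBer_low hBer_top c hc_mul hc_alg hc_η α at' hα σ

end
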